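/- arXiv:1906.04683 — 8 statements merged into one kernel-verified Lean document; each statement's English description precedes it below -/
import Mathlib

section
/- Let σ² > 0 and define f(N) = N · ∫₀^∞ exp(−t·σ² − N·(1 − e^{−t})) dt for N ≥ 0. Then f(0) = 0 and lim_{N→∞} f(N) = 1. -/
open MeasureTheory Real Filter Set

-- x * exp (-x) ≤ 1 for x ≥ 0
private lemma aux_xexp (x : ℝ) : x * Real.exp (-x) ≤ 1 := by
  rcases le_or_gt x 0 with h | h
  · calc x * Real.exp (-x) ≤ 0 := mul_nonpos_of_nonpos_of_nonneg h (Real.exp_pos _).le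
    _ ≤ 1 := one_pos.le
  · rw [Real.exp_neg, mul_inv_le_iff₀ (Real.exp_pos _), one_mul]
    exact (le_of_lt (lt_of_lt_of_le (by linarith) (Real.add_one_le_exp x)))

-- t * exp (-a*t) ≤ (2/a) * exp (-(a/2)*t) for t ≥ 0, a > 0
private lemma aux_texp {a : ℝ} (ha : 0 < a) (t : ℝ) (ht : 0 ≤ t) :
    t * Real.exp (-a * t) ≤ (2 / a) * Real.exp (-(a / 2) * t) := by
  have h1 : t * Real.exp (-a * t) = (2/a) * ((a/2 * t) * Real.exp (-(a/2 * t))) * Real.exp (-(a/2) * t) := by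
    rw [show -a * t = -(a/2*t) + (-(a/2)*t) by ring, Real.exp_add]; field_simp
  rw [h1]
  have h2 := aux_xexp (a/2 * t)
  have h3 : (0:ℝ) < 2/a := by positivity
  nlinarith [Real.exp_pos (-(a/2) * t), mul_le_of_le_one_right h3.le h2]

private lemma int_texp {a : ℝ} (ha : 0 < a) :
    IntegrableOn (fun t : ℝ => t * Real.exp (-a * t)) (Ioi 0) := by
  refine Integrable.mono' (((exp_neg_integrableOn_Ioi 0 (half_pos ha)).const_mul (2/a))) ?_ ?_
  · exact ((continuous_id.mul ((continuous_const.mul continuous_id).rexp)).aestronglyMeasurable).restrict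
  · filter_upwards [ae_restrict_mem measurableSet_Ioi] with t ht
    rw [Real.norm_eq_abs, abs_of_nonneg (mul_nonneg (le_of_lt ht) (Real.exp_pos _).le)]
    exact aux_texp ha t (le_of_lt ht)

private lemma int_texp_eq {a : ℝ} (ha : 0 < a) :
    ∫ t in Ioi (0:ℝ), t * Real.exp (-a * t) = 1 / a ^ 2 := by
  have key : ∀ t : ℝ, HasDerivAt (fun t : ℝ => -(t / a + 1 / a ^ 2) * Real.exp (-a * t))
      (t * Real.exp (-a * t)) t := by
    intro t
    have h1 : HasDerivAt (fun t : ℝ => -(t / a + 1 / a ^ 2)) (-(1/a)) t := by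
      exact (((hasDerivAt_id t).div_const a).add_const (1/a^2)).neg
    have h2 : HasDerivAt (fun t : ℝ => Real.exp (-a * t)) (-a * Real.exp (-a * t)) t := by
      simpa [mul_comm] using (((hasDerivAt_id t).const_mul (-a)).exp)
    have := h1.mul h2
    refine this.congr_deriv ?_
    field_simp
    ring
  have hlim : Tendsto (fun t : ℝ => -(t / a + 1 / a ^ 2) * Real.exp (-a * t)) atTop (nhds 0) := by
    have h1 : Tendsto (fun t : ℝ => t * Real.exp (-a * t)) atTop (nhds 0) := by
      have := (tendsto_pow_mul_exp_neg_atTop_nhds_zero 1).comp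
        (tendsto_id.const_mul_atTop ha)
      have h2 := this.const_mul (1/a)
      rw [mul_zero] at h2
      refine h2.congr fun t => ?_
      simp [Function.comp]
      field_simp
    have h2 : Tendsto (fun t : ℝ => Real.exp (-a * t)) atTop (nhds 0) := by
      have := tendsto_exp_neg_atTop_nhds_zero.comp (tendsto_id.const_mul_atTop ha)
      refine this.congr fun t => by simp [Function.comp]
    have := ((h1.const_mul (-(1/a))).add (h2.const_mul (-(1/a^2))))
    simp only [mul_zero, add_zero] at this
    refine this.congr fun t => ?_
    ring
  have := integral_Ioi_of_hasDerivAt_of_tendsto' (f' := fun t => t * Real.exp (-a * t))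
    (fun x _ => key x) (int_texp ha) hlim
  rw [this]
  simp

-- integrability of the main integrand
private lemma int_main {s N : ℝ} (hs : 0 < s) (hN : 0 ≤ N) :
    IntegrableOn (fun t : ℝ => Real.exp (-t * s - N * (1 - Real.exp (-t)))) (Ioi 0) := by
  refine Integrable.mono' (exp_neg_integrableOn_Ioi 0 hs) ?_ ?_
  · exact (Real.continuous_exp.comp (by continuity)).aestronglyMeasurable.restrict
  · filter_upwards [ae_restrict_mem measurableSet_Ioi] with t ht
    rw [Real.norm_eq_abs, abs_of_nonneg (Real.exp_pos _).le]
    apply Real.exp_le_exp.2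
    have h1 : Real.exp (-t) ≤ 1 := Real.exp_le_one_iff.2 (by linarith [le_of_lt (show (0:ℝ) < t from ht)])
    nlinarith [le_of_lt (show (0:ℝ) < t from ht)]


private lemma exp_diff_le {a b : ℝ} (hab : a ≤ b) :
    Real.exp (-a) - Real.exp (-b) ≤ (b - a) * Real.exp (-a) := by
  have h1 : 1 - (b - a) ≤ Real.exp (-(b - a)) := by linarith [Real.add_one_le_exp (-(b-a))]
  have h2 : Real.exp (-b) = Real.exp (-a) * Real.exp (-(b - a)) := by
    rw [← Real.exp_add]; ring_nf
  nlinarith [Real.exp_pos (-a)]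

private lemma diff_exp {s t : ℝ} (hs : 0 < s) (ht : 0 ≤ t) :
    |Real.exp (-t * s) - Real.exp (-t * 1)| ≤ |s - 1| * (t * Real.exp (-(min s 1) * t)) := by
  rcases le_total s 1 with h | h
  · have hle : t * s ≤ t * 1 := by nlinarith
    have h2 : Real.exp (-(t*1)) ≤ Real.exp (-(t*s)) := Real.exp_le_exp.2 (by linarith)
    have h1 := exp_diff_le hle
    rw [min_eq_left h,
      show -t*s = -(t*s) by ring, show -t*1 = -(t*1) by ring, show -s*t = -(t*s) by ring,
      abs_of_nonneg (by linarith : (0:ℝ) ≤ Real.exp (-(t*s)) - Real.exp (-(t*1))),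
      abs_of_nonpos (by linarith : s - 1 ≤ 0)]
    nlinarith [Real.exp_pos (-(t*s))]
  · have hle : t * 1 ≤ t * s := by nlinarith
    have h2 : Real.exp (-(t*s)) ≤ Real.exp (-(t*1)) := Real.exp_le_exp.2 (by linarith)
    have h1 := exp_diff_le hle
    rw [min_eq_right h,
      show -t*s = -(t*s) by ring, show -t*1 = -(t*1) by ring, show -(1:ℝ)*t = -(t*1) by ring,
      abs_of_nonpos (by linarith : Real.exp (-(t*s)) - Real.exp (-(t*1)) ≤ 0),
      abs_of_nonneg (by linarith : (0:ℝ) ≤ s - 1)]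
    nlinarith [Real.exp_pos (-(t*1))]

private lemma expX_le {N t : ℝ} (hN : 0 ≤ N) (ht : 0 ≤ t) :
    Real.exp (-(N * (1 - Real.exp (-t)))) ≤ Real.exp (-(N/2) * t) + Real.exp (-(N/2)) := by
  rcases le_total t 1 with h | h
  · have hE : Real.exp (-t) * Real.exp t = 1 := by rw [← Real.exp_add]; simp
    have hA : 1 + t ≤ Real.exp t := by linarith [Real.add_one_le_exp t]
    have key : Real.exp (-t) ≤ 1 - t/2 := by nlinarith [Real.exp_pos (-t), Real.exp_pos t]
    have : -(N * (1 - Real.exp (-t))) ≤ -(N/2) * t := by nlinarith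
    calc Real.exp (-(N * (1 - Real.exp (-t)))) ≤ Real.exp (-(N/2) * t) := Real.exp_le_exp.2 this
      _ ≤ _ := le_add_of_nonneg_right (Real.exp_pos _).le
  · have hE : Real.exp (-1 : ℝ) * Real.exp 1 = 1 := by rw [← Real.exp_add]; simp
    have hA : (2:ℝ) ≤ Real.exp 1 := by linarith [Real.add_one_le_exp (1:ℝ)]
    have h1 : Real.exp (-t) ≤ Real.exp (-1 : ℝ) := Real.exp_le_exp.2 (by linarith)
    have h2 : Real.exp (-1 : ℝ) ≤ 1/2 := by nlinarith [Real.exp_pos (-1 : ℝ)]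
    have : -(N * (1 - Real.exp (-t))) ≤ -(N/2) := by nlinarith
    calc Real.exp (-(N * (1 - Real.exp (-t)))) ≤ Real.exp (-(N/2)) := Real.exp_le_exp.2 this
      _ ≤ _ := le_add_of_nonneg_left (Real.exp_pos _).le

private lemma pt_bound {σ2 : ℝ} (hσ : 0 < σ2) {N t : ℝ} (hN : 0 ≤ N) (ht : 0 < t) :
    ‖N * Real.exp (-t * σ2 - N * (1 - Real.exp (-t)))
        - N * Real.exp (-t * 1 - N * (1 - Real.exp (-t)))‖
      ≤ N * |σ2 - 1| * (t * Real.exp (-(N/2) * t)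
          + Real.exp (-(N/2)) * (t * Real.exp (-(min σ2 1) * t))) := by
  set X := N * (1 - Real.exp (-t)) with hX
  set m := min σ2 1 with hm
  have hsplit : ∀ s : ℝ, Real.exp (-t * s - X) = Real.exp (-t * s) * Real.exp (-X) := by
    intro s; rw [← Real.exp_add]; ring_nf
  rw [hsplit, hsplit, ← mul_sub, ← sub_mul, Real.norm_eq_abs, abs_mul, abs_mul,
    abs_of_nonneg hN, abs_of_nonneg (Real.exp_pos (-X)).le, ← mul_assoc, mul_assoc N]
  have hd := diff_exp hσ ht.le
  have hx := expX_le hN ht.le (t := t)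
  have hmt : Real.exp (-m * t) ≤ 1 := by
    apply Real.exp_le_one_iff.2
    have : 0 < m := lt_min hσ one_pos
    nlinarith
  have h0 : 0 ≤ |Real.exp (-t * σ2) - Real.exp (-t * 1)| := abs_nonneg _
  have h1 : |Real.exp (-t * σ2) - Real.exp (-t * 1)| * Real.exp (-X)
      ≤ (|σ2 - 1| * (t * Real.exp (-m * t))) * (Real.exp (-(N/2) * t) + Real.exp (-(N/2))) := by
    apply mul_le_mul hd hx (Real.exp_pos _).le
    positivity
  have h2 : (|σ2 - 1| * (t * Real.exp (-m * t))) * (Real.exp (-(N/2) * t) + Real.exp (-(N/2)))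
      ≤ |σ2 - 1| * (t * Real.exp (-(N/2) * t) + Real.exp (-(N/2)) * (t * Real.exp (-m * t))) := by
    have e1 : (0:ℝ) < Real.exp (-(N/2) * t) := Real.exp_pos _
    have e2 : (0:ℝ) < Real.exp (-(N/2)) := Real.exp_pos _
    have e3 : (0:ℝ) < Real.exp (-m * t) := Real.exp_pos _
    have habs : (0:ℝ) ≤ |σ2 - 1| := abs_nonneg _
    nlinarith [mul_le_mul_of_nonneg_left (mul_le_of_le_one_right e1.le hmt)
      (mul_nonneg habs ht.le)]
  calc N * (|Real.exp (-t * σ2) - Real.exp (-t * 1)| * Real.exp (-X))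
      ≤ N * ((|σ2 - 1| * (t * Real.exp (-m * t))) * (Real.exp (-(N/2) * t) + Real.exp (-(N/2)))) :=
        by apply mul_le_mul_of_nonneg_left h1 hN
    _ ≤ N * (|σ2 - 1| * (t * Real.exp (-(N/2) * t) + Real.exp (-(N/2)) * (t * Real.exp (-m * t)))) :=
        by apply mul_le_mul_of_nonneg_left h2 hN
    _ = _ := by ring

private lemma ident {N : ℝ} (hN : 0 ≤ N) :
    ∫ t in Ioi (0:ℝ), N * Real.exp (-t * 1 - N * (1 - Real.exp (-t))) = 1 - Real.exp (-N) := by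
  have key : ∀ t : ℝ, HasDerivAt (fun t : ℝ => -Real.exp (-N * (1 - Real.exp (-t))))
      (N * Real.exp (-t * 1 - N * (1 - Real.exp (-t)))) t := by
    intro t
    have h1 : HasDerivAt (fun t : ℝ => -N * (1 - Real.exp (-t))) (-N * Real.exp (-t)) t := by
      have he : HasDerivAt (fun t : ℝ => Real.exp (-t)) (-Real.exp (-t)) t := by
        simpa using ((hasDerivAt_id t).neg.exp)
      simpa using ((he.const_sub (1:ℝ)).const_mul (-N))
    have := (h1.exp).neg
    refine this.congr_deriv ?_
    rw [show -t * 1 - N * (1 - Real.exp (-t)) = (-N * (1 - Real.exp (-t))) + (-t) by ring,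
      Real.exp_add]
    ring
  have hint : IntegrableOn (fun t : ℝ => N * Real.exp (-t * 1 - N * (1 - Real.exp (-t)))) (Ioi 0) :=
    (int_main one_pos hN).const_mul N
  have hlim : Tendsto (fun t : ℝ => -Real.exp (-N * (1 - Real.exp (-t)))) atTop
      (nhds (-Real.exp (-N))) := by
    have h1 : Tendsto (fun t : ℝ => Real.exp (-t)) atTop (nhds 0) := tendsto_exp_neg_atTop_nhds_zero
    have h2 : Tendsto (fun t : ℝ => -N * (1 - Real.exp (-t))) atTop (nhds (-N * (1 - 0))) :=
      ((tendsto_const_nhds.sub h1).const_mul (-N))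
    have h3 := (Real.continuous_exp.tendsto _).comp h2
    simp only [sub_zero, mul_one] at h3
    exact h3.neg
  have := integral_Ioi_of_hasDerivAt_of_tendsto'
    (f' := fun t => N * Real.exp (-t * 1 - N * (1 - Real.exp (-t)))) (fun x _ => key x) hint hlim
  rw [this]
  simp
  ring

theorem stmt_0 (σ2 : ℝ) (hσ : 0 < σ2) :
    (fun N : ℝ => N * ∫ t in Set.Ioi (0:ℝ), Real.exp (-t * σ2 - N * (1 - Real.exp (-t)))) 0 = 0 ∧
    Tendsto (fun N : ℝ => N * ∫ t in Set.Ioi (0:ℝ),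
      Real.exp (-t * σ2 - N * (1 - Real.exp (-t)))) atTop (nhds 1) := by
  constructor
  · simp
  · have hm0 : 0 < min σ2 1 := lt_min hσ one_pos
    set m := min σ2 1 with hm
    have hbound : ∀ N : ℝ, 0 < N →
        ‖(N * ∫ t in Set.Ioi (0:ℝ), Real.exp (-t * σ2 - N * (1 - Real.exp (-t))))
          - (1 - Real.exp (-N))‖ ≤
        N * |σ2 - 1| * (1/(N/2)^2 + Real.exp (-(N/2)) * (1/m^2)) := by
      intro N hN
      have hint1 : IntegrableOn
          (fun t : ℝ => N * Real.exp (-t * σ2 - N * (1 - Real.exp (-t)))) (Ioi 0) :=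
        (int_main hσ hN.le).const_mul N
      have hint2 : IntegrableOn
          (fun t : ℝ => N * Real.exp (-t * 1 - N * (1 - Real.exp (-t)))) (Ioi 0) :=
        (int_main one_pos hN.le).const_mul N
      have hG1 : IntegrableOn (fun t : ℝ => t * Real.exp (-(N/2) * t)) (Ioi 0) :=
        int_texp (by positivity)
      have hG2 : IntegrableOn
          (fun t : ℝ => Real.exp (-(N/2)) * (t * Real.exp (-m * t))) (Ioi 0) :=
        (int_texp hm0).const_mul _
      have hG : IntegrableOn (fun t : ℝ => N * |σ2 - 1| *
          (t * Real.exp (-(N/2) * t) + Real.exp (-(N/2)) * (t * Real.exp (-m * t)))) (Ioi 0) :=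
        ((hG1.add hG2).const_mul _)
      have hEq : (N * ∫ t in Set.Ioi (0:ℝ), Real.exp (-t * σ2 - N * (1 - Real.exp (-t))))
          - (1 - Real.exp (-N)) =
          ∫ t in Ioi (0:ℝ), (N * Real.exp (-t * σ2 - N * (1 - Real.exp (-t)))
            - N * Real.exp (-t * 1 - N * (1 - Real.exp (-t)))) := by
        rw [integral_sub hint1 hint2, ident hN.le, MeasureTheory.integral_const_mul]
      rw [hEq]
      calc ‖∫ t in Ioi (0:ℝ), (N * Real.exp (-t * σ2 - N * (1 - Real.exp (-t)))
            - N * Real.exp (-t * 1 - N * (1 - Real.exp (-t))))‖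
          ≤ ∫ t in Ioi (0:ℝ), N * |σ2 - 1| *
            (t * Real.exp (-(N/2) * t) + Real.exp (-(N/2)) * (t * Real.exp (-m * t))) := by
            refine norm_integral_le_of_norm_le hG ?_
            filter_upwards [ae_restrict_mem measurableSet_Ioi] with t ht
            exact pt_bound hσ hN.le ht
        _ = N * |σ2 - 1| * (1/(N/2)^2 + Real.exp (-(N/2)) * (1/m^2)) := by
            rw [MeasureTheory.integral_const_mul, integral_add hG1 hG2, int_texp_eq (by positivity : (0:ℝ) < N/2),
              MeasureTheory.integral_const_mul, int_texp_eq hm0]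
    have hb : Tendsto (fun N : ℝ => N * |σ2 - 1| * (1/(N/2)^2 + Real.exp (-(N/2)) * (1/m^2)))
        atTop (nhds 0) := by
      have h1 : Tendsto (fun N : ℝ => |σ2 - 1| * 4 * N⁻¹) atTop (nhds 0) := by
        simpa using tendsto_inv_atTop_zero.const_mul (|σ2 - 1| * 4)
      have h2 : Tendsto (fun N : ℝ => (|σ2 - 1| / m^2) * (2 * ((N/2) ^ 1 * Real.exp (-(N/2)))))
          atTop (nhds 0) := by
        have h3 := (tendsto_pow_mul_exp_neg_atTop_nhds_zero 1).comp
          (tendsto_id.atTop_div_const two_pos)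
        have h4 := (h3.const_mul (2:ℝ)).const_mul (|σ2 - 1| / m^2)
        simpa using h4
      have h5 := h1.add h2
      rw [add_zero] at h5
      apply h5.congr'
      filter_upwards [eventually_gt_atTop 0] with N hN
      have hNne : N ≠ 0 := ne_of_gt hN
      field_simp
      ring
    apply Tendsto.congr (f₁ := fun N : ℝ =>
      ((N * ∫ t in Set.Ioi (0:ℝ), Real.exp (-t * σ2 - N * (1 - Real.exp (-t))))
        - (1 - Real.exp (-N))) + (1 - Real.exp (-N)))
    · intro N; ring
    · have hdiff : Tendsto (fun N : ℝ =>
          (N * ∫ t in Set.Ioi (0:ℝ), Real.exp (-t * σ2 - N * (1 - Real.exp (-t))))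
            - (1 - Real.exp (-N))) atTop (nhds 0) := by
        apply squeeze_zero_norm' _ hb
        filter_upwards [eventually_gt_atTop 0] with N hN using hbound N hN
      have hg : Tendsto (fun N : ℝ => 1 - Real.exp (-N)) atTop (nhds 1) := by
        simpa using (tendsto_const_nhds (x := (1:ℝ)) (f := atTop)).sub
          tendsto_exp_neg_atTop_nhds_zero
      simpa using hdiff.add hg
end

section
/- Let σ² ≥ 1. The function f(N) = N · ∫₀^∞ exp(−t·σ² − N·(1 − e^{−t})) dt is strictly increasing in N on [0, ∞). -/
open MeasureTheory Real Set Filter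

private lemma deriv_aux (c N t : ℝ) :
    HasDerivAt (fun t => -Real.exp (-t*c - N*(1 - Real.exp (-t))))
      ((c + N*Real.exp (-t)) * Real.exp (-t*c - N*(1 - Real.exp (-t)))) t := by
  have he : HasDerivAt (fun t : ℝ => Real.exp (-t)) (-Real.exp (-t)) t := by
    simpa [Function.comp_def] using (Real.hasDerivAt_exp (-t)).comp t (hasDerivAt_neg t)
  have h1 : HasDerivAt (fun t : ℝ => -t*c - N*(1 - Real.exp (-t)))
      (-c - N * Real.exp (-t)) t := by
    have h0 : HasDerivAt (fun t : ℝ => -t*c) (-c) t := by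
      simpa using ((hasDerivAt_id t).neg.mul_const c)
    have h2 : HasDerivAt (fun t : ℝ => N*(1 - Real.exp (-t))) (N * Real.exp (-t)) t := by
      have := ((hasDerivAt_const t (1:ℝ)).sub he).const_mul N
      simpa using this
    exact h0.sub h2
  have := ((Real.hasDerivAt_exp (-t*c - N*(1 - Real.exp (-t)))).comp t h1).neg
  exact this.congr_deriv (by ring)

private lemma integ_aux (b N : ℝ) (hb : 0 < b) (hN : 0 ≤ N) :
    IntegrableOn (fun t => Real.exp (-t*b - N*(1 - Real.exp (-t)))) (Set.Ioi 0) := by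
  have hmaj : IntegrableOn (fun t : ℝ => Real.exp (-b * t)) (Set.Ioi 0) :=
    exp_neg_integrableOn_Ioi 0 hb
  have hcont : Continuous (fun t : ℝ => Real.exp (-t*b - N*(1 - Real.exp (-t)))) :=
    Real.continuous_exp.comp ((continuous_neg.mul continuous_const).sub
      (continuous_const.mul (continuous_const.sub (Real.continuous_exp.comp continuous_neg))))
  refine Integrable.mono hmaj hcont.aestronglyMeasurable.restrict ?_
  filter_upwards [ae_restrict_mem measurableSet_Ioi] with t ht
  rw [Real.norm_eq_abs, Real.norm_eq_abs, abs_of_pos (Real.exp_pos _),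
      abs_of_pos (Real.exp_pos _)]
  apply Real.exp_le_exp.2
  have h1 : Real.exp (-t) ≤ 1 := Real.exp_le_one_iff.2 (by linarith [le_of_lt (Set.mem_Ioi.mp ht)])
  nlinarith [le_of_lt (Set.mem_Ioi.mp ht)]

private lemma key (c N : ℝ) (hc : 0 < c) (hN : 0 ≤ N) :
    c * (∫ t in Set.Ioi (0:ℝ), Real.exp (-t*c - N*(1 - Real.exp (-t))))
      + N * (∫ t in Set.Ioi (0:ℝ), Real.exp (-t*(c+1) - N*(1 - Real.exp (-t)))) = 1 := by
  set g : ℝ → ℝ := fun t => Real.exp (-t*c - N*(1 - Real.exp (-t))) with hg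
  set h : ℝ → ℝ := fun t => Real.exp (-t*(c+1) - N*(1 - Real.exp (-t))) with hh
  have hgint : IntegrableOn g (Set.Ioi 0) := integ_aux c N hc hN
  have hhint : IntegrableOn h (Set.Ioi 0) := integ_aux (c+1) N (by linarith) hN
  have hfun : ∀ t : ℝ, (c + N*Real.exp (-t)) * Real.exp (-t*c - N*(1 - Real.exp (-t)))
      = c * g t + N * h t := by
    intro t
    simp only [hg, hh]
    rw [show -t*(c+1) - N*(1 - Real.exp (-t)) = (-t) + (-t*c - N*(1 - Real.exp (-t))) by ring,
      Real.exp_add]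
    ring
  have hint : ∫ t in Set.Ioi (0:ℝ),
      (c + N*Real.exp (-t)) * Real.exp (-t*c - N*(1 - Real.exp (-t)))
      = 1 := by
    have htend : Tendsto (fun t => -Real.exp (-t*c - N*(1 - Real.exp (-t)))) atTop (nhds 0) := by
      rw [show (0:ℝ) = -0 by ring]
      apply Tendsto.neg
      have hup : Tendsto (fun t : ℝ => Real.exp (-c * t)) atTop (nhds 0) := by
        apply Real.tendsto_exp_atBot.comp
        exact (tendsto_id.const_mul_atTop_of_neg (by linarith)).comp tendsto_id
      apply squeeze_zero' (Eventually.of_forall (fun t => (Real.exp_pos _).le)) _ hup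
      filter_upwards [eventually_ge_atTop (0:ℝ)] with t h0
      apply Real.exp_le_exp.2
      have h1 : Real.exp (-t) ≤ 1 := Real.exp_le_one_iff.2 (by linarith)
      nlinarith
    have := integral_Ioi_of_hasDerivAt_of_tendsto
      (f := fun t => -Real.exp (-t*c - N*(1 - Real.exp (-t))))
      (f' := fun t => (c + N*Real.exp (-t)) * Real.exp (-t*c - N*(1 - Real.exp (-t))))
      (a := 0) (m := 0)
      (Continuous.continuousWithinAt (by continuity))
      (fun x _ => deriv_aux c N x)
      ?_ htend
    · rw [this]; simp
    · rw [show (fun t => (c + N*Real.exp (-t)) * Real.exp (-t*c - N*(1 - Real.exp (-t))))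
        = fun t => c * g t + N * h t from funext hfun]
      exact (hgint.const_mul c).add (hhint.const_mul N)
  rw [show (fun t => (c + N*Real.exp (-t)) * Real.exp (-t*c - N*(1 - Real.exp (-t))))
      = fun t => c * g t + N * h t from funext hfun] at hint
  rw [integral_add (hgint.const_mul c) (hhint.const_mul N),
    integral_const_mul, integral_const_mul] at hint
  exact hint

private lemma key0 (N : ℝ) (hN : 0 ≤ N) :
    N * (∫ t in Set.Ioi (0:ℝ), Real.exp (-t*1 - N*(1 - Real.exp (-t)))) = 1 - Real.exp (-N) := by
  set h : ℝ → ℝ := fun t => Real.exp (-t*1 - N*(1 - Real.exp (-t))) with hh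
  have hhint : IntegrableOn h (Set.Ioi 0) := integ_aux 1 N one_pos hN
  have hfun : ∀ t : ℝ, ((0:ℝ) + N*Real.exp (-t)) * Real.exp (-t*0 - N*(1 - Real.exp (-t)))
      = N * h t := by
    intro t
    simp only [hh]
    rw [show -t*1 - N*(1 - Real.exp (-t)) = (-t) + (-t*0 - N*(1 - Real.exp (-t))) by ring,
      Real.exp_add]
    ring
  have htend : Tendsto (fun t => -Real.exp (-t*0 - N*(1 - Real.exp (-t)))) atTop
      (nhds (-Real.exp (-N))) := by
    apply Tendsto.neg
    have harg : Tendsto (fun t : ℝ => -t*0 - N*(1 - Real.exp (-t))) atTop (nhds (-N)) := by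
      have h1 : Tendsto (fun t : ℝ => Real.exp (-t)) atTop (nhds 0) := by
        apply Real.tendsto_exp_atBot.comp
        exact tendsto_neg_atBot_iff.2 tendsto_id
      have := ((tendsto_const_nhds (x := (1:ℝ))).sub h1).const_mul N
      have h2 := ((tendsto_const_nhds (x := (0:ℝ)) (f := atTop (α := ℝ))).sub this)
      simpa using h2
    exact (Real.continuous_exp.tendsto _).comp harg
  have := integral_Ioi_of_hasDerivAt_of_tendsto
    (f := fun t => -Real.exp (-t*0 - N*(1 - Real.exp (-t))))
    (f' := fun t => ((0:ℝ) + N*Real.exp (-t)) * Real.exp (-t*0 - N*(1 - Real.exp (-t))))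
    (a := 0) (m := -Real.exp (-N))
    (Continuous.continuousWithinAt (by continuity))
    (fun x _ => deriv_aux 0 N x)
    ?_ htend
  · rw [show (fun t => ((0:ℝ) + N*Real.exp (-t)) * Real.exp (-t*0 - N*(1 - Real.exp (-t))))
      = fun t => N * h t from funext hfun] at this
    rw [integral_const_mul] at this
    rw [this]; simp; ring
  · rw [show (fun t => ((0:ℝ) + N*Real.exp (-t)) * Real.exp (-t*0 - N*(1 - Real.exp (-t))))
      = fun t => N * h t from funext hfun]
    exact hhint.const_mul N

theorem stmt_3 (σ2 : ℝ) (hσ : 1 ≤ σ2) :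
    StrictMonoOn (fun N : ℝ => N * ∫ t in Set.Ioi (0:ℝ),
      Real.exp (-t * σ2 - N * (1 - Real.exp (-t)))) (Set.Ici 0) := by
  intro a ha b hb hab
  simp only
  rcases eq_or_lt_of_le hσ with h1 | h1
  · subst h1
    rw [key0 a ha, key0 b (le_trans ha hab.le)]
    have : Real.exp (-b) < Real.exp (-a) := Real.exp_lt_exp.2 (by linarith)
    linarith
  · set c := σ2 - 1 with hc
    have hcpos : 0 < c := by simp [hc]; linarith
    have hσeq : σ2 = c + 1 := by ring
    rw [hσeq]
    have hb' : (0:ℝ) ≤ b := le_trans ha hab.le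
    have ka := key c a hcpos ha
    have kb := key c b hcpos hb'
    -- suffices: ∫ g_b < ∫ g_a
    have hlt : (∫ t in Set.Ioi (0:ℝ), Real.exp (-t*c - b*(1 - Real.exp (-t))))
        < ∫ t in Set.Ioi (0:ℝ), Real.exp (-t*c - a*(1 - Real.exp (-t))) := by
      have hga : IntegrableOn (fun t => Real.exp (-t*c - a*(1 - Real.exp (-t)))) (Set.Ioi 0) :=
        integ_aux c a hcpos ha
      have hgb : IntegrableOn (fun t => Real.exp (-t*c - b*(1 - Real.exp (-t)))) (Set.Ioi 0) :=
        integ_aux c b hcpos hb'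
      rw [← sub_pos, ← integral_sub hga hgb]
      have hint2 : IntegrableOn (fun t => Real.exp (-t*c - a*(1 - Real.exp (-t)))
          - Real.exp (-t*c - b*(1 - Real.exp (-t)))) (Set.Ioi 0) := hga.sub hgb
      have hpos : ∀ t ∈ Set.Ioi (0:ℝ),
          0 < Real.exp (-t*c - a*(1 - Real.exp (-t))) - Real.exp (-t*c - b*(1 - Real.exp (-t))) := by
        intro t ht
        rw [sub_pos]
        apply Real.exp_lt_exp.2
        have hu : 0 < 1 - Real.exp (-t) := by
          have : Real.exp (-t) < 1 := Real.exp_lt_one_iff.2 (by simpa using ht)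
          linarith
        nlinarith
      rw [setIntegral_pos_iff_support_of_nonneg_ae ?_ hint2]
      · have hsub : Set.Ioi (0:ℝ) ⊆ Function.support
            (fun t => Real.exp (-t*c - a*(1 - Real.exp (-t))) - Real.exp (-t*c - b*(1 - Real.exp (-t)))) := by
          intro t ht
          exact ne_of_gt (hpos t ht)
        have hle : volume (Set.Ioi (0:ℝ)) ≤ volume (Function.support
            (fun t => Real.exp (-t*c - a*(1 - Real.exp (-t)))
              - Real.exp (-t*c - b*(1 - Real.exp (-t)))) ∩ Set.Ioi 0) :=
          measure_mono (fun t ht => ⟨hsub ht, ht⟩)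
        refine lt_of_lt_of_le ?_ hle
        simp [Real.volume_Ioi]
      · filter_upwards [ae_restrict_mem measurableSet_Ioi] with t ht
        exact (hpos t ht).le
    have hfin : a * (∫ t in Set.Ioi (0:ℝ), Real.exp (-t*(c+1) - a*(1 - Real.exp (-t))))
        < b * (∫ t in Set.Ioi (0:ℝ), Real.exp (-t*(c+1) - b*(1 - Real.exp (-t)))) := by
      nlinarith
    convert hfin using 3
end

section
/- Let σ² ≥ 1 and C > 1. Then the equation C = N · ∫₀^∞ exp(−t·σ² − N·(1 − e^{−t})) dt has no solution N ∈ [0, ∞). -/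
open MeasureTheory Real Set Filter

lemma aux_integrable (N : ℝ) (hN : 0 ≤ N) (c : ℝ) (hc : 1 ≤ c) :
    IntegrableOn (fun t => Real.exp (-t * c - N * (1 - Real.exp (-t)))) (Set.Ioi (0:ℝ)) := by
  have hbase : IntegrableOn (fun t => Real.exp (-1 * t)) (Set.Ioi (0:ℝ)) :=
    exp_neg_integrableOn_Ioi 0 one_pos
  refine hbase.mono' ?_ ?_
  · apply Continuous.aestronglyMeasurable
    fun_prop
  · filter_upwards [ae_restrict_mem measurableSet_Ioi] with t ht
    rw [Real.norm_eq_abs, abs_of_pos (Real.exp_pos _)]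
    apply Real.exp_le_exp.2
    have h1 : -t * c ≤ -1 * t := by nlinarith [le_of_lt (mem_Ioi.mp ht)]
    have h2 : 0 ≤ N * (1 - Real.exp (-t)) := by
      apply mul_nonneg hN
      have : Real.exp (-t) ≤ 1 := Real.exp_le_one_iff.2 (by linarith [le_of_lt (mem_Ioi.mp ht)])
      linarith
    linarith

lemma aux_integral (N : ℝ) (hN : 0 < N) :
    ∫ t in Set.Ioi (0:ℝ), Real.exp (-t * 1 - N * (1 - Real.exp (-t)))
      = (1 - Real.exp (-N)) / N := by
  have hderiv : ∀ x ∈ Set.Ici (0:ℝ),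
      HasDerivAt (fun t => -(1/N) * Real.exp (-N * (1 - Real.exp (-t))))
        (Real.exp (-x * 1 - N * (1 - Real.exp (-x)))) x := by
    intro x _
    have h1 : HasDerivAt (fun t : ℝ => -N * (1 - Real.exp (-t))) (-N * Real.exp (-x)) x := by
      have := (Real.hasDerivAt_exp (-x)).comp x (hasDerivAt_neg x)
      have h2 : HasDerivAt (fun t : ℝ => 1 - Real.exp (-t)) (Real.exp (-x)) x := by
        simpa [Function.comp_def] using this.const_sub 1
      simpa [mul_comm] using h2.const_mul (-N)
    have h3 := (Real.hasDerivAt_exp _).comp x h1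
    have h4 := h3.const_mul (-(1/N))
    refine h4.congr_deriv ?_
    rw [show -x*1 - N*(1-Real.exp (-x)) = (-x) + (-N*(1-Real.exp (-x))) by ring, Real.exp_add]
    field_simp
  have hint : IntegrableOn (fun x : ℝ => Real.exp (-x * 1 - N * (1 - Real.exp (-x))))
      (Set.Ioi 0) := aux_integrable N hN.le 1 le_rfl
  have htend : Tendsto (fun t => -(1/N) * Real.exp (-N * (1 - Real.exp (-t)))) atTop
      (nhds (-(1/N) * Real.exp (-N))) := by
    have h0 : Tendsto (fun t : ℝ => Real.exp (-t)) atTop (nhds 0) :=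
      Real.tendsto_exp_neg_atTop_nhds_zero
    have : Tendsto (fun t : ℝ => -N * (1 - Real.exp (-t))) atTop (nhds (-N)) := by
      have := ((tendsto_const_nhds (x := (1:ℝ))).sub h0).const_mul (-N)
      simpa using this
    exact (Real.continuous_exp.tendsto _ |>.comp this).const_mul _
  rw [integral_Ioi_of_hasDerivAt_of_tendsto' hderiv hint htend]
  simp
  field_simp
  ring

theorem stmt_4 (σ2 C : ℝ) (hσ : 1 ≤ σ2) (hC : 1 < C) :
    ∀ N : ℝ, 0 ≤ N →
      C ≠ N * ∫ t in Set.Ioi (0:ℝ), Real.exp (-t * σ2 - N * (1 - Real.exp (-t))) := by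
  intro N hN
  rcases eq_or_lt_of_le hN with rfl | hNpos
  · simp; linarith
  intro hEq
  have hmono : ∫ t in Set.Ioi (0:ℝ), Real.exp (-t * σ2 - N * (1 - Real.exp (-t)))
      ≤ ∫ t in Set.Ioi (0:ℝ), Real.exp (-t * 1 - N * (1 - Real.exp (-t))) := by
    refine setIntegral_mono_on (aux_integrable N hN σ2 hσ) (aux_integrable N hN 1 le_rfl)
      measurableSet_Ioi ?_
    intro t ht
    apply Real.exp_le_exp.2
    have : -t * σ2 ≤ -t * 1 := by nlinarith [le_of_lt (mem_Ioi.mp ht)]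
    linarith
  rw [aux_integral N hNpos] at hmono
  have hb : N * ∫ t in Set.Ioi (0:ℝ), Real.exp (-t * σ2 - N * (1 - Real.exp (-t)))
      ≤ N * ((1 - Real.exp (-N)) / N) := by
    exact mul_le_mul_of_nonneg_left hmono hN
  rw [mul_div_cancel₀ _ (ne_of_gt hNpos)] at hb
  have := Real.exp_pos (-N)
  linarith [hEq ▸ hb]
end

section
/- Let 0 < σ² < 1. The function f(N) = N · ∫₀^∞ exp(−t·σ² − N·(1 − e^{−t})) dt is strictly increasing on the interval [0, 1]. -/
open MeasureTheory Real
open scoped ENNReal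

lemma stmt5_integrable (σ2 N : ℝ) (hσ0 : 0 < σ2) (hN : 0 ≤ N) :
    IntegrableOn (fun t : ℝ => Real.exp (-t * σ2 - N * (1 - Real.exp (-t))))
      (Set.Ioi 0) := by
  have hbase : IntegrableOn (fun t : ℝ => Real.exp (-σ2 * t)) (Set.Ioi 0) :=
    exp_neg_integrableOn_Ioi 0 hσ0
  refine Integrable.mono hbase ?_ ?_
  · exact (Continuous.aestronglyMeasurable (by fun_prop)).restrict
  · filter_upwards [ae_restrict_mem measurableSet_Ioi] with t ht
    rw [Real.norm_eq_abs, Real.norm_eq_abs, Real.abs_exp, Real.abs_exp]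
    apply Real.exp_le_exp.mpr
    have h1 : Real.exp (-t) ≤ 1 := Real.exp_le_one_iff.mpr (by linarith [Set.mem_Ioi.mp ht])
    nlinarith [Set.mem_Ioi.mp ht]

lemma stmt5_phi_mono (g : ℝ) (hg0 : 0 < g) (hg1 : g < 1) :
    StrictMonoOn (fun x : ℝ => x * Real.exp (-x * g)) (Set.Icc 0 1) := by
  apply strictMonoOn_of_deriv_pos (convex_Icc 0 1)
  · exact (continuous_id.mul (by continuity)).continuousOn
  · intro x hx
    rw [interior_Icc] at hx
    obtain ⟨hx0, hx1⟩ := hx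
    have h1 : HasDerivAt (fun x : ℝ => Real.exp (-x * g)) (Real.exp (-x * g) * (-g)) x := by
      have h0 : HasDerivAt (fun x : ℝ => -x * g) (-g) x := by
        simpa using ((hasDerivAt_id x).neg.mul_const g)
      exact HasDerivAt.exp h0
    have h2 : HasDerivAt (fun x : ℝ => x * Real.exp (-x * g))
        (1 * Real.exp (-x * g) + x * (Real.exp (-x * g) * (-g))) x :=
      (hasDerivAt_id x).mul h1
    rw [h2.deriv]
    have he : 0 < Real.exp (-x * g) := Real.exp_pos _
    have hxg : x * g < 1 := by nlinarith
    nlinarith [mul_pos he (show (0:ℝ) < 1 - x * g by linarith)]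

theorem stmt_5 (σ2 : ℝ) (hσ0 : 0 < σ2) (hσ1 : σ2 < 1) :
    StrictMonoOn (fun N : ℝ => N * ∫ t in Set.Ioi (0:ℝ),
      Real.exp (-t * σ2 - N * (1 - Real.exp (-t)))) (Set.Icc 0 1) := by
  intro M hM N hN hMN
  obtain ⟨hM0, hM1⟩ := hM
  obtain ⟨hN0, hN1⟩ := hN
  have hiM := stmt5_integrable σ2 M hσ0 hM0
  have hiN := stmt5_integrable σ2 N hσ0 hN0
  simp only
  rw [← integral_const_mul, ← integral_const_mul]
  have hiM' := hiM.const_mul M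
  have hiN' := hiN.const_mul N
  have key : ∀ t ∈ Set.Ioi (0:ℝ),
      0 < N * Real.exp (-t * σ2 - N * (1 - Real.exp (-t)))
          - M * Real.exp (-t * σ2 - M * (1 - Real.exp (-t))) := by
    intro t ht
    have ht0 : 0 < t := ht
    set g : ℝ := 1 - Real.exp (-t) with hg
    have hg0 : 0 < g := by
      have : Real.exp (-t) < 1 := Real.exp_lt_one_iff.mpr (by linarith)
      simp [hg]; linarith
    have hg1 : g < 1 := by
      have : 0 < Real.exp (-t) := Real.exp_pos _
      simp [hg]; linarith
    have hmono := stmt5_phi_mono g hg0 hg1 ⟨hM0, hM1⟩ ⟨hN0, hN1⟩ hMN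
    simp only at hmono
    have hrw : ∀ x : ℝ, Real.exp (-t * σ2 - x * g) = Real.exp (-t * σ2) * Real.exp (-x * g) := by
      intro x; rw [← Real.exp_add]; ring_nf
    have hE : 0 < Real.exp (-t * σ2) := Real.exp_pos _
    have := mul_lt_mul_of_pos_left hmono hE
    calc (0:ℝ) < Real.exp (-t * σ2) * (N * Real.exp (-N * g))
            - Real.exp (-t * σ2) * (M * Real.exp (-M * g)) := by linarith
      _ = N * Real.exp (-t * σ2 - N * g) - M * Real.exp (-t * σ2 - M * g) := by
            rw [hrw, hrw]; ring
  have hsub : Integrable (fun t : ℝ =>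
      N * Real.exp (-t * σ2 - N * (1 - Real.exp (-t)))
        - M * Real.exp (-t * σ2 - M * (1 - Real.exp (-t))))
      (volume.restrict (Set.Ioi 0)) := hiN'.sub hiM'
  have hpos : 0 < ∫ t in Set.Ioi (0:ℝ),
      (N * Real.exp (-t * σ2 - N * (1 - Real.exp (-t)))
        - M * Real.exp (-t * σ2 - M * (1 - Real.exp (-t)))) := by
    have hnn : 0 ≤ᵐ[volume.restrict (Set.Ioi (0:ℝ))] (fun t : ℝ =>
        N * Real.exp (-t * σ2 - N * (1 - Real.exp (-t)))
          - M * Real.exp (-t * σ2 - M * (1 - Real.exp (-t)))) := by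
      filter_upwards [ae_restrict_mem measurableSet_Ioi] with t ht
      exact (key t ht).le
    rw [setIntegral_pos_iff_support_of_nonneg_ae hnn hsub]
    have hsubset : Set.Ioi (0:ℝ) ⊆ (Function.support fun t : ℝ =>
        N * Real.exp (-t * σ2 - N * (1 - Real.exp (-t)))
          - M * Real.exp (-t * σ2 - M * (1 - Real.exp (-t)))) ∩ Set.Ioi 0 :=
      fun t ht => ⟨(key t ht).ne', ht⟩
    calc (0:ℝ≥0∞) < volume (Set.Ioi (0:ℝ)) := by simp
      _ ≤ _ := measure_mono hsubset
  have := integral_sub hiN' hiM'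
  rw [this] at hpos
  linarith
end

section
/- Let 0 < σ² < 1 and let N ≥ (1 + σ²)/(1 − σ²). Then the function f(N) = N · ∫₀^∞ exp(−t·σ² − N·(1 − e^{−t})) dt is strictly decreasing on [(1+σ²)/(1−σ²), ∞). -/
open MeasureTheory Real

lemma intexp {c : ℝ} (hc : 0 < c) : ∫ t in Set.Ioi (0:ℝ), Real.exp (-(c*t)) = 1/c := by
  have := MeasureTheory.integral_comp_mul_left_Ioi (fun x => Real.exp (-x)) 0 hc
  simp only [mul_zero] at this
  rw [show (fun t : ℝ => Real.exp (-(c*t))) = (fun t : ℝ => (fun x => Real.exp (-x)) (c * t)) from rfl]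
  rw [this, integral_exp_neg_Ioi_zero, smul_eq_mul, mul_one, one_div]

lemma intexpon {c : ℝ} (hc : 0 < c) : IntegrableOn (fun t : ℝ => Real.exp (-(c*t))) (Set.Ioi 0) := by
  simpa [neg_mul] using exp_neg_integrableOn_Ioi 0 hc

lemma expser (x : ℝ) : Real.exp x = ∑' k : ℕ, x^k / k.factorial := by
  rw [Real.exp_eq_exp_ℝ, NormedSpace.exp_eq_tsum_div]

lemma sumfact {r : ℝ} (hr : 0 ≤ r) : Summable (fun k : ℕ => (k+1 : ℝ) * r^k / k.factorial) := by
  refine Summable.of_nonneg_of_le (fun k => by positivity) (fun k => ?_)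
    (Real.summable_pow_div_factorial (2*r))
  rw [mul_pow]
  gcongr
  exact_mod_cast Nat.succ_le_of_lt (Nat.lt_two_pow_self)

lemma div_fac_le (σ2 : ℝ) (hσ0 : 0 < σ2) (c : ℝ) (k : ℕ) (hc : 0 ≤ c) :
    c/(k.factorial*((k:ℝ)+σ2)) ≤ c/k.factorial * σ2⁻¹ := by
  calc c/(k.factorial*((k:ℝ)+σ2)) ≤ c/(k.factorial*σ2) := by
        refine div_le_div_of_nonneg_left hc (by positivity) ?_
        have : σ2 ≤ (k:ℝ) + σ2 := by linarith [Nat.cast_nonneg (α := ℝ) k]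
        exact mul_le_mul_of_nonneg_left this (Nat.cast_nonneg _)
    _ = c/k.factorial * σ2⁻¹ := by rw [← div_div, div_eq_mul_inv]

lemma series_rep (σ2 : ℝ) (hσ0 : 0 < σ2) (N : ℝ) (hN : 0 ≤ N) :
    ∫ t in Set.Ioi (0:ℝ), Real.exp (-t * σ2 - N * (1 - Real.exp (-t)))
      = ∑' k : ℕ, Real.exp (-N) * (N^k / k.factorial) * (1/(k + σ2)) := by
  set F : ℕ → ℝ → ℝ := fun k t => Real.exp (-N) * (N^k / k.factorial) * Real.exp (-((k+σ2)*t))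
    with hF
  have hkpos : ∀ k : ℕ, (0:ℝ) < k + σ2 := fun k => by positivity
  have hpt : ∀ t : ℝ, Real.exp (-t * σ2 - N * (1 - Real.exp (-t))) = ∑' k, F k t := by
    intro t
    have h1 : Real.exp (-t * σ2 - N * (1 - Real.exp (-t)))
        = Real.exp (-N) * Real.exp (-t*σ2) * Real.exp (N * Real.exp (-t)) := by
      rw [← Real.exp_add, ← Real.exp_add]; ring_nf
    rw [h1, expser (N * Real.exp (-t)), ← tsum_mul_left]
    refine tsum_congr fun k => ?_
    have h2 : (N * Real.exp (-t))^k = N^k * Real.exp ((k:ℕ) * (-t)) := by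
      rw [Real.exp_nat_mul, mul_pow]
    rw [h2, hF]
    simp only []
    rw [show -((((k:ℕ):ℝ)+σ2)*t) = -t*σ2 + ((k:ℕ):ℝ)*(-t) by ring, Real.exp_add]
    ring
  have hint : ∀ k : ℕ, Integrable (F k) (volume.restrict (Set.Ioi 0)) := by
    intro k
    exact ((intexpon (hkpos k)).const_mul _)
  have hval : ∀ k : ℕ, ∫ t in Set.Ioi (0:ℝ), F k t
      = Real.exp (-N) * (N^k / k.factorial) * (1/(k + σ2)) := by
    intro k
    rw [hF]
    simp only []
    rw [MeasureTheory.integral_const_mul, intexp (hkpos k)]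
  have hnn : ∀ k : ℕ, ∀ t : ℝ, 0 ≤ F k t := by
    intro k t; rw [hF]; positivity
  have hnormval : ∀ k : ℕ, (∫ t in Set.Ioi (0:ℝ), ‖F k t‖)
      = Real.exp (-N) * (N^k / k.factorial) * (1/(k + σ2)) := by
    intro k
    rw [show (fun t => ‖F k t‖) = F k from funext fun t => Real.norm_of_nonneg (hnn k t)]
    exact hval k
  have hsum : Summable fun k : ℕ => ∫ t in Set.Ioi (0:ℝ), ‖F k t‖ := by
    rw [show (fun k : ℕ => ∫ t in Set.Ioi (0:ℝ), ‖F k t‖)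
      = fun k : ℕ => Real.exp (-N) * (N^k / k.factorial) * (1/(k + σ2)) from funext hnormval]
    refine Summable.of_nonneg_of_le (fun k => by positivity) (fun k => ?_)
      (((Real.summable_pow_div_factorial N).mul_left (Real.exp (-N) * σ2⁻¹)))
    have h1k : 1/((k:ℝ) + σ2) ≤ σ2⁻¹ := by
      rw [one_div]
      exact inv_anti₀ hσ0 (by linarith [Nat.cast_nonneg (α := ℝ) k])
    calc Real.exp (-N) * (N^k / k.factorial) * (1/(k + σ2))
        ≤ Real.exp (-N) * (N^k / k.factorial) * σ2⁻¹ := by gcongr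
      _ = Real.exp (-N) * σ2⁻¹ * (N^k / k.factorial) := by ring
  calc ∫ t in Set.Ioi (0:ℝ), Real.exp (-t * σ2 - N * (1 - Real.exp (-t)))
      = ∫ t in Set.Ioi (0:ℝ), ∑' k, F k t := by
        rw [show (fun t => Real.exp (-t * σ2 - N * (1 - Real.exp (-t))))
          = fun t => ∑' k, F k t from funext hpt]
    _ = ∑' k, ∫ t in Set.Ioi (0:ℝ), F k t :=
        (MeasureTheory.integral_tsum_of_summable_integral_norm hint hsum).symm
    _ = ∑' k : ℕ, Real.exp (-N) * (N^k / k.factorial) * (1/(k + σ2)) := tsum_congr hval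

lemma feq (σ2 : ℝ) (hσ0 : 0 < σ2) (N : ℝ) (hN : 0 < N) :
    N * ∫ t in Set.Ioi (0:ℝ), Real.exp (-t * σ2 - N * (1 - Real.exp (-t)))
      = ∑' k : ℕ, Real.exp (-N) * (N^(k+1) / (k.factorial * ((k:ℝ)+σ2))) := by
  rw [series_rep σ2 hσ0 N hN.le, ← tsum_mul_left]
  refine tsum_congr fun k => ?_
  have e1 : ((k:ℝ)+σ2) ≠ 0 := by positivity
  have e3 : ((k.factorial:ℝ)) ≠ 0 := by exact_mod_cast k.factorial_pos.ne'
  rw [pow_succ]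
  field_simp

lemma hterm_deriv (σ2 : ℝ) (k : ℕ) (y : ℝ) :
    HasDerivAt (fun y : ℝ => Real.exp (-y) * (y^(k+1) / (k.factorial * ((k:ℝ)+σ2))))
      (Real.exp (-y) * (((k+1:ℝ)*y^k - y^(k+1)) / (k.factorial * ((k:ℝ)+σ2)))) y := by
  have h1 : HasDerivAt (fun y : ℝ => Real.exp (-y)) (Real.exp (-y) * (-1)) y :=
    (hasDerivAt_neg y).exp
  have h2 : HasDerivAt (fun y : ℝ => y^(k+1)) (((k+1:ℕ):ℝ) * y^k) y := by
    simpa using hasDerivAt_pow (k+1) y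
  have h3 := (h1.mul h2).div_const (k.factorial * ((k:ℝ)+σ2))
  convert h3 using 1
  · rfl
  · rfl
  · funext z; simp only [Pi.mul_apply]; ring
  · push_cast; ring

lemma tsum_b_neg (σ2 : ℝ) (hσ0 : 0 < σ2) (hσ1 : σ2 < 1) (N : ℝ)
    (hN : (1+σ2)/(1-σ2) < N) :
    ∑' k : ℕ, ((k+1 : ℝ)*N^k - N^(k+1))/(k.factorial*(k+σ2)) < 0 := by
  have h1σ : 0 < 1 - σ2 := by linarith
  have hN0 : 0 < N := lt_trans (by positivity) hN
  have hkpos : ∀ k : ℕ, (0:ℝ) < k + σ2 := fun k => by positivity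
  have hk1pos : ∀ k : ℕ, (0:ℝ) < k + 1 + σ2 := fun k => by positivity
  have hle : ∀ (c : ℝ) (k : ℕ), 0 ≤ c → c/(k.factorial*(k+σ2)) ≤ c/k.factorial * σ2⁻¹ := by
    intro c k hc
    calc c/(k.factorial*(k+σ2)) ≤ c/(k.factorial*σ2) := by
          refine div_le_div_of_nonneg_left hc (by positivity) ?_
          have : σ2 ≤ (k:ℝ) + σ2 := by linarith [Nat.cast_nonneg (α := ℝ) k]
          exact mul_le_mul_of_nonneg_left this (Nat.cast_nonneg _)
      _ = c/k.factorial * σ2⁻¹ := by rw [← div_div, div_eq_mul_inv]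
  set A : ℕ → ℝ := fun k => (k+1 : ℝ)*N^k/(k.factorial*(k+σ2)) with hA
  set B : ℕ → ℝ := fun k => N^(k+1)/(k.factorial*(k+σ2)) with hB
  set w : ℕ → ℝ := fun k => N^(k+1)/((k+1).factorial*((k+σ2)*(k+1+σ2))) with hw
  have sA : Summable A := by
    refine Summable.of_nonneg_of_le (fun k => by positivity) (fun k => ?_)
      ((sumfact hN0.le).mul_right σ2⁻¹)
    exact hle _ k (by positivity)
  have sB : Summable B := by
    refine Summable.of_nonneg_of_le (fun k => by positivity) (fun k => ?_)
      ((((Real.summable_pow_div_factorial N).mul_left N)).mul_right σ2⁻¹)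
    refine (hle _ k (by positivity)).trans_eq ?_
    rw [pow_succ, mul_comm (N^k) N, mul_div_assoc]
  have sA' : Summable (fun k : ℕ => A (k+1)) := (summable_nat_add_iff 1).2 sA
  have sw : Summable w := by
    refine Summable.of_nonneg_of_le (fun k => by positivity) (fun k => ?_)
      ((((Real.summable_pow_div_factorial N).mul_left N)).mul_right (σ2⁻¹ * σ2⁻¹))
    rw [hw]
    have hden : (k.factorial:ℝ)*(σ2*σ2) ≤ ((k+1).factorial:ℝ)*((k+σ2)*(k+1+σ2)) := by
      have h1 : (k.factorial:ℝ) ≤ ((k+1).factorial:ℝ) := by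
        exact_mod_cast Nat.factorial_le (Nat.le_succ k)
      have h2 : σ2*σ2 ≤ ((k:ℝ)+σ2)*((k:ℝ)+1+σ2) := by
        nlinarith [Nat.cast_nonneg (α := ℝ) k]
      exact mul_le_mul h1 h2 (by positivity) (by positivity)
    calc N^(k+1)/(((k+1).factorial:ℝ)*((k+σ2)*(k+1+σ2)))
        ≤ N^(k+1)/((k.factorial:ℝ)*(σ2*σ2)) :=
          div_le_div_of_nonneg_left (by positivity) (by positivity) hden
      _ = N * (N^k/k.factorial) * (σ2⁻¹ * σ2⁻¹) := by
          rw [pow_succ]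
          field_simp
  have hterm : ∀ k : ℕ, A (k+1) - B k = -((1-σ2) * w k) := by
    intro k
    rw [hA, hB, hw]
    simp only [Nat.factorial_succ]
    push_cast
    have e1 := (hkpos k).ne'
    have e2 := (hk1pos k).ne'
    have e3 : ((k.factorial:ℝ)) ≠ 0 := by exact_mod_cast k.factorial_pos.ne'
    field_simp
    ring
  have key : ∑' k, (A k - B k) < 0 := by
    have h1 : ∑' k, (A k - B k) = ∑' k, A k - ∑' k, B k := Summable.tsum_sub sA sB
    have h2 : ∑' k, A k = A 0 + ∑' k, A (k+1) := Summable.tsum_eq_zero_add sA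
    have h3 : ∑' k : ℕ, (A (k+1) - B k) = ∑' k, A (k+1) - ∑' k, B k := Summable.tsum_sub sA' sB
    have h4 : ∑' k : ℕ, (A (k+1) - B k) = -((1-σ2) * ∑' k, w k) := by
      rw [show (fun k : ℕ => A (k+1) - B k) = fun k : ℕ => -((1-σ2) * w k) from funext hterm]
      rw [tsum_neg, tsum_mul_left]
    have hA0 : A 0 = 1/σ2 := by rw [hA]; norm_num
    have hw0 : w 0 = N/(σ2*(1+σ2)) := by rw [hw]; norm_num
    have hwge : N/(σ2*(1+σ2)) ≤ ∑' k, w k := by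
      rw [← hw0]
      exact Summable.le_tsum sw 0 (fun j _ => by positivity)
    have h5 : 1+σ2 < (1-σ2)*N := by
      rw [div_lt_iff₀ h1σ] at hN; linarith
    have hstrict : 1/σ2 < (1-σ2) * (N/(σ2*(1+σ2))) := by
      have e : 1/σ2 = (1+σ2)/(σ2*(1+σ2)) := by
        rw [div_eq_div_iff (by positivity) (by positivity)]; ring
      have e2 : (1-σ2) * (N/(σ2*(1+σ2))) = ((1-σ2)*N)/(σ2*(1+σ2)) := by ring
      rw [e, e2]
      exact (div_lt_div_iff_of_pos_right (by positivity)).2 h5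
    have hfin : ∑' k, (A k - B k) = 1/σ2 - (1-σ2) * ∑' k, w k := by
      rw [h1, h2, hA0]
      rw [h3] at h4
      linarith
    rw [hfin]
    have : 1/σ2 < (1-σ2) * ∑' k, w k :=
      hstrict.trans_le (mul_le_mul_of_nonneg_left hwge h1σ.le)
    linarith
  refine lt_of_eq_of_lt ?_ key
  refine tsum_congr fun k => ?_
  rw [hA, hB, sub_div]

lemma main_deriv (σ2 : ℝ) (hσ0 : 0 < σ2) (x : ℝ) (hx : 0 < x) :
    HasDerivAt (fun N : ℝ => N * ∫ t in Set.Ioi (0:ℝ),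
        Real.exp (-t * σ2 - N * (1 - Real.exp (-t))))
      (∑' k : ℕ, Real.exp (-x) * (((k+1:ℝ)*x^k - x^(k+1)) / (k.factorial * ((k:ℝ)+σ2)))) x := by
  have hx1 : (0:ℝ) ≤ x + 1 := by linarith
  set u : ℕ → ℝ := fun k => ((k+1:ℝ)*(x+1)^k/k.factorial) * σ2⁻¹
    + ((x+1)*((x+1)^k/k.factorial)) * σ2⁻¹ with hu_def
  have hu : Summable u :=
    ((sumfact hx1).mul_right σ2⁻¹).add
      (((Real.summable_pow_div_factorial (x+1)).mul_left (x+1)).mul_right σ2⁻¹)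
  have hmem : x ∈ Set.Ioo (0:ℝ) (x+1) := ⟨hx, by linarith⟩
  have hbound : ∀ (k : ℕ), ∀ y ∈ Set.Ioo (0:ℝ) (x+1),
      ‖Real.exp (-y) * (((k+1:ℝ)*y^k - y^(k+1)) / (k.factorial * ((k:ℝ)+σ2)))‖ ≤ u k := by
    intro k y hy
    obtain ⟨hy0, hyx⟩ := hy
    have hden : (0:ℝ) < k.factorial * ((k:ℝ)+σ2) := by positivity
    rw [Real.norm_eq_abs, abs_mul, abs_of_pos (Real.exp_pos _), abs_div,
      abs_of_pos hden]
    have hexp1 : Real.exp (-y) ≤ 1 := Real.exp_le_one_iff.2 (by linarith)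
    have habs : |((k+1:ℝ)*y^k - y^(k+1))| ≤ (k+1:ℝ)*y^k + y^(k+1) := by
      refine (abs_sub _ _).trans ?_
      rw [abs_of_nonneg (by positivity), abs_of_nonneg (by positivity)]
    calc Real.exp (-y) * (|((k+1:ℝ)*y^k - y^(k+1))| / (k.factorial * ((k:ℝ)+σ2)))
        ≤ 1 * (((k+1:ℝ)*y^k + y^(k+1)) / (k.factorial * ((k:ℝ)+σ2))) := by
          gcongr
      _ = ((k+1:ℝ)*y^k + y^(k+1)) / (k.factorial * ((k:ℝ)+σ2)) := one_mul _
      _ ≤ ((k+1:ℝ)*(x+1)^k + (x+1)^(k+1)) / (k.factorial * ((k:ℝ)+σ2)) := by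
          gcongr <;> linarith
      _ ≤ ((k+1:ℝ)*(x+1)^k + (x+1)^(k+1)) / k.factorial * σ2⁻¹ :=
          div_fac_le σ2 hσ0 _ k (by positivity)
      _ = u k := by rw [hu_def]; rw [pow_succ]; ring
  have hg0 : Summable (fun k : ℕ => Real.exp (-x) * (x^(k+1) / (k.factorial * ((k:ℝ)+σ2)))) := by
    refine Summable.of_nonneg_of_le (fun k => by positivity) (fun k => ?_)
      ((((Real.summable_pow_div_factorial x).mul_left (Real.exp (-x) * x)).mul_right σ2⁻¹))
    have := div_fac_le σ2 hσ0 (x^(k+1)) k (by positivity)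
    calc Real.exp (-x) * (x^(k+1) / (k.factorial * ((k:ℝ)+σ2)))
        ≤ Real.exp (-x) * (x^(k+1)/k.factorial * σ2⁻¹) := by
          gcongr
      _ = Real.exp (-x) * x * (x^k/k.factorial) * σ2⁻¹ := by rw [pow_succ]; ring
  have hG : HasDerivAt
      (fun y : ℝ => ∑' k : ℕ, Real.exp (-y) * (y^(k+1) / (k.factorial * ((k:ℝ)+σ2))))
      (∑' k : ℕ, Real.exp (-x) * (((k+1:ℝ)*x^k - x^(k+1)) / (k.factorial * ((k:ℝ)+σ2)))) x :=
    hasDerivAt_tsum_of_isPreconnected hu isOpen_Ioo (convex_Ioo _ _).isPreconnected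
      (fun k y _ => hterm_deriv σ2 k y) hbound hmem hg0 hmem
  refine hG.congr_of_eventuallyEq ?_
  refine Filter.eventuallyEq_of_mem (isOpen_Ioi.mem_nhds hx) (fun y hy => ?_)
  exact feq σ2 hσ0 y hy

theorem stmt_6 (σ2 : ℝ) (hσ0 : 0 < σ2) (hσ1 : σ2 < 1) :
    StrictAntiOn (fun N : ℝ => N * ∫ t in Set.Ioi (0:ℝ),
      Real.exp (-t * σ2 - N * (1 - Real.exp (-t)))) (Set.Ici ((1 + σ2) / (1 - σ2))) := by
  have h1σ : 0 < 1 - σ2 := by linarith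
  have hN₀pos : 0 < (1 + σ2) / (1 - σ2) := by positivity
  refine strictAntiOn_of_deriv_neg (convex_Ici _) ?_ ?_
  · intro y hy
    exact ((main_deriv σ2 hσ0 y (hN₀pos.trans_le hy)).continuousAt).continuousWithinAt
  · intro y hy
    rw [interior_Ici] at hy
    have hy0 : 0 < y := hN₀pos.trans hy
    rw [(main_deriv σ2 hσ0 y hy0).deriv]
    rw [tsum_mul_left]
    exact mul_neg_of_pos_of_neg (Real.exp_pos _) (tsum_b_neg σ2 hσ0 hσ1 y hy)
end

section
/- Let 0 < σ² < 1. For all N ≥ 0, f(N) = N · ∫₀^∞ exp(−t·σ² − N·(1 − e^{−t})) dt satisfies f(N) ≥ 1 − e^{−N}. -/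
open MeasureTheory Real

theorem stmt_7 (σ2 : ℝ) (hσ0 : 0 < σ2) (hσ1 : σ2 < 1) :
    ∀ N : ℝ, 0 ≤ N →
      1 - Real.exp (-N) ≤
        N * ∫ t in Set.Ioi (0:ℝ), Real.exp (-t * σ2 - N * (1 - Real.exp (-t))) := by
  intro N hN
  rcases eq_or_lt_of_le hN with rfl | hN
  · simp
  -- integrability of the main integrand
  have hint : IntegrableOn (fun t => Real.exp (-t * σ2 - N * (1 - Real.exp (-t))))
      (Set.Ioi (0:ℝ)) := by
    apply Integrable.mono' (exp_neg_integrableOn_Ioi 0 hσ0)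
    · apply Continuous.aestronglyMeasurable
      continuity
    · filter_upwards [ae_restrict_mem measurableSet_Ioi] with t ht
      rw [Real.norm_eq_abs, abs_of_pos (Real.exp_pos _), Real.exp_le_exp]
      have h1 : 0 ≤ N * (1 - Real.exp (-t)) := by
        apply mul_nonneg hN.le
        simp [Real.exp_le_one_iff]
        linarith [Set.mem_Ioi.mp ht]
      linarith [mul_comm t σ2]
  -- lower bound integrand: g t = exp(-t - N(1 - exp(-t)))
  set g : ℝ → ℝ := fun t => Real.exp (-t - N * (1 - Real.exp (-t))) with hg
  have hgint : IntegrableOn g (Set.Ioi (0:ℝ)) := by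
    apply Integrable.mono' (exp_neg_integrableOn_Ioi 0 one_pos)
    · apply Continuous.aestronglyMeasurable
      continuity
    · filter_upwards [ae_restrict_mem measurableSet_Ioi] with t ht
      rw [Real.norm_eq_abs, abs_of_pos (Real.exp_pos _), Real.exp_le_exp]
      have h1 : 0 ≤ N * (1 - Real.exp (-t)) := by
        apply mul_nonneg hN.le
        simp [Real.exp_le_one_iff]
        linarith [Set.mem_Ioi.mp ht]
      linarith
  -- compute ∫ g = (1 - exp(-N))/N  via antiderivative F t = -exp(-N(1-exp(-t)))/N
  have hF : ∀ t : ℝ, HasDerivAt (fun t => -Real.exp (-N * (1 - Real.exp (-t))) / N) (g t) t := by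
    intro t
    have h1 : HasDerivAt (fun t : ℝ => -N * (1 - Real.exp (-t))) (-N * Real.exp (-t)) t := by
      have := ((hasDerivAt_neg t).exp.const_sub 1).const_mul (-N)
      simpa using this
    have h2 := h1.exp
    have h3 := (h2.neg.div_const N)
    refine h3.congr_deriv ?_
    symm
    have hN' : N ≠ 0 := hN.ne'
    field_simp [hg]
    show Real.exp (-t - N*(1-Real.exp (-t))) = _
    rw [show -t - N*(1-Real.exp (-t)) = -(N*(1-Real.exp (-t))) + -t by ring, Real.exp_add]
    ring
  have htend : Filter.Tendsto (fun t => -Real.exp (-N * (1 - Real.exp (-t))) / N)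
      Filter.atTop (nhds (-Real.exp (-N) / N)) := by
    have h1 : Filter.Tendsto (fun t : ℝ => Real.exp (-t)) Filter.atTop (nhds 0) := by
      simpa using Real.tendsto_exp_neg_atTop_nhds_zero
    have h2 : Filter.Tendsto (fun t : ℝ => -N * (1 - Real.exp (-t))) Filter.atTop
        (nhds (-N * (1 - 0))) := (h1.const_sub 1).const_mul (-N)
    have := ((Real.continuous_exp.tendsto _).comp h2).neg.div_const N
    simpa using this
  have hcalc : ∫ t in Set.Ioi (0:ℝ), g t = (1 - Real.exp (-N)) / N := by
    rw [integral_Ioi_of_hasDerivAt_of_tendsto (hF 0).continuousAt.continuousWithinAt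
      (fun x _ => hF x) hgint htend]
    simp
    ring
  -- pointwise comparison
  have hmono : ∫ t in Set.Ioi (0:ℝ), g t ≤
      ∫ t in Set.Ioi (0:ℝ), Real.exp (-t * σ2 - N * (1 - Real.exp (-t))) := by
    apply setIntegral_mono_on hgint hint measurableSet_Ioi
    intro t ht
    rw [hg, Real.exp_le_exp]
    have ht' : 0 < t := ht
    nlinarith
  rw [hcalc] at hmono
  calc 1 - Real.exp (-N) = N * ((1 - Real.exp (-N)) / N) := by field_simp
    _ ≤ _ := by apply mul_le_mul_of_nonneg_left hmono hN.le
end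

section
/- Let 0 < σ² < 1 and b ∈ (0,1). For all N ≥ 0, f(N) = N · ∫₀¹ e^{−N(1−t)} t^{σ²−1} dt ≤ b^{σ²−1} · (b/((1−b)·σ²) + 1). In particular, taking b = 1/2, f(N) ≤ 2^{1−σ²} · (1 + 1/σ²). -/
open MeasureTheory Real intervalIntegral

theorem stmt_11 (σ2 : ℝ) (hσ0 : 0 < σ2) (hσ1 : σ2 < 1) :
    (∀ b : ℝ, 0 < b → b < 1 → ∀ N : ℝ, 0 ≤ N →
      N * ∫ t in (0:ℝ)..1, Real.exp (-N * (1 - t)) * t ^ (σ2 - 1) ≤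
        b ^ (σ2 - 1) * (b / ((1 - b) * σ2) + 1)) ∧
    (∀ N : ℝ, 0 ≤ N →
      N * ∫ t in (0:ℝ)..1, Real.exp (-N * (1 - t)) * t ^ (σ2 - 1) ≤
        (2:ℝ) ^ (1 - σ2) * (1 + 1 / σ2)) := by
  have hr : (-1:ℝ) < σ2 - 1 := by linarith
  have main : ∀ b : ℝ, 0 < b → b < 1 → ∀ N : ℝ, 0 ≤ N →
      N * ∫ t in (0:ℝ)..1, Real.exp (-N * (1 - t)) * t ^ (σ2 - 1) ≤
        b ^ (σ2 - 1) * (b / ((1 - b) * σ2) + 1) := by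
    intro b hb0 hb1 N hN0
    have hbpow : (0:ℝ) < b ^ (σ2 - 1) := Real.rpow_pos_of_pos hb0 _
    have hRHS : 0 ≤ b ^ (σ2 - 1) * (b / ((1 - b) * σ2) + 1) := by
      have h1b : (0:ℝ) < 1 - b := by linarith
      positivity
    rcases eq_or_lt_of_le hN0 with hN | hN
    · rw [← hN]; simpa using hRHS
    -- integrability
    have hcont : ∀ a c : ℝ, ContinuousOn (fun t : ℝ => Real.exp (-N * (1 - t))) (Set.uIcc a c) := by
      intro a c; fun_prop
    have hint1 : IntervalIntegrable (fun t : ℝ => Real.exp (-N * (1 - t)) * t ^ (σ2 - 1))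
        volume 0 b :=
      (intervalIntegral.intervalIntegrable_rpow' hr).continuousOn_mul (hcont 0 b)
    have hint2 : IntervalIntegrable (fun t : ℝ => Real.exp (-N * (1 - t)) * t ^ (σ2 - 1))
        volume b 1 :=
      (intervalIntegral.intervalIntegrable_rpow' hr).continuousOn_mul (hcont b 1)
    have hsplit : (∫ t in (0:ℝ)..1, Real.exp (-N * (1 - t)) * t ^ (σ2 - 1)) =
        (∫ t in (0:ℝ)..b, Real.exp (-N * (1 - t)) * t ^ (σ2 - 1)) +
        (∫ t in b..(1:ℝ), Real.exp (-N * (1 - t)) * t ^ (σ2 - 1)) :=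
      (intervalIntegral.integral_add_adjacent_intervals hint1 hint2).symm
    -- head bound
    have hhead : (∫ t in (0:ℝ)..b, Real.exp (-N * (1 - t)) * t ^ (σ2 - 1)) ≤
        Real.exp (-N * (1 - b)) * (b ^ σ2 / σ2) := by
      have hmono : (∫ t in (0:ℝ)..b, Real.exp (-N * (1 - t)) * t ^ (σ2 - 1)) ≤
          ∫ t in (0:ℝ)..b, Real.exp (-N * (1 - b)) * t ^ (σ2 - 1) := by
        apply intervalIntegral.integral_mono_on hb0.le hint1
          ((intervalIntegral.intervalIntegrable_rpow' hr).continuousOn_mul (by fun_prop))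
        intro t ht
        have htb : t ≤ b := ht.2
        have h1 : Real.exp (-N * (1 - t)) ≤ Real.exp (-N * (1 - b)) := by
          apply Real.exp_le_exp.mpr; nlinarith
        have h2 : (0:ℝ) ≤ t ^ (σ2 - 1) := Real.rpow_nonneg ht.1 _
        exact mul_le_mul_of_nonneg_right h1 h2
      calc _ ≤ ∫ t in (0:ℝ)..b, Real.exp (-N * (1 - b)) * t ^ (σ2 - 1) := hmono
        _ = Real.exp (-N * (1 - b)) * ∫ t in (0:ℝ)..b, t ^ (σ2 - 1) := by
            rw [intervalIntegral.integral_const_mul]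
        _ = Real.exp (-N * (1 - b)) * (b ^ σ2 / σ2) := by
            rw [integral_rpow (Or.inl hr)]
            rw [Real.zero_rpow (by linarith : σ2 - 1 + 1 ≠ 0)]
            ring_nf
    -- tail bound
    have htail : (∫ t in b..(1:ℝ), Real.exp (-N * (1 - t)) * t ^ (σ2 - 1)) ≤
        b ^ (σ2 - 1) * ((1 - Real.exp (-N * (1 - b))) / N) := by
      have hmono : (∫ t in b..(1:ℝ), Real.exp (-N * (1 - t)) * t ^ (σ2 - 1)) ≤
          ∫ t in b..(1:ℝ), Real.exp (-N * (1 - t)) * b ^ (σ2 - 1) := by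
        apply intervalIntegral.integral_mono_on hb1.le hint2
          (Continuous.intervalIntegrable (by fun_prop) _ _)
        intro t ht
        have h2 : t ^ (σ2 - 1) ≤ b ^ (σ2 - 1) :=
          Real.rpow_le_rpow_of_nonpos hb0 ht.1 (by linarith)
        exact mul_le_mul_of_nonneg_left h2 (Real.exp_nonneg _)
      have hcalc : (∫ t in b..(1:ℝ), Real.exp (-N * (1 - t))) =
          (1 - Real.exp (-N * (1 - b))) / N := by
        have : (fun t : ℝ => Real.exp (-N * (1 - t))) =
            fun t : ℝ => Real.exp (-N) * Real.exp (N * t) := by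
          funext t; rw [← Real.exp_add]; ring_nf
        rw [this, intervalIntegral.integral_const_mul,
          intervalIntegral.integral_comp_mul_left (fun x => Real.exp x) (ne_of_gt hN)]
        simp only [smul_eq_mul, integral_exp]
        rw [mul_one, show -N * (1 - b) = -N + N * b by ring, Real.exp_add, Real.exp_neg]
        field_simp [Real.exp_ne_zero]
      calc _ ≤ ∫ t in b..(1:ℝ), Real.exp (-N * (1 - t)) * b ^ (σ2 - 1) := hmono
        _ = (∫ t in b..(1:ℝ), Real.exp (-N * (1 - t))) * b ^ (σ2 - 1) := by
            rw [intervalIntegral.integral_mul_const]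
        _ = b ^ (σ2 - 1) * ((1 - Real.exp (-N * (1 - b))) / N) := by rw [hcalc]; ring
    -- combine
    rw [hsplit, mul_add]
    have hNexp : N * Real.exp (-N * (1 - b)) ≤ 1 / (1 - b) := by
      have h1b : (0:ℝ) < 1 - b := by linarith
      have hx : N * (1 - b) * Real.exp (-(N * (1 - b))) ≤ 1 := by
        set x := N * (1 - b) with hxdef
        have hx0 : 0 ≤ x := by positivity
        have h := Real.add_one_le_exp x
        rw [Real.exp_neg]
        calc x * (Real.exp x)⁻¹ ≤ Real.exp x * (Real.exp x)⁻¹ :=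
            mul_le_mul_of_nonneg_right (by linarith) (inv_nonneg.2 (Real.exp_pos x).le)
          _ = 1 := mul_inv_cancel₀ (Real.exp_ne_zero x)
      rw [div_eq_inv_mul, le_inv_mul_iff₀ h1b]
      calc (1 - b) * (N * Real.exp (-N * (1 - b)))
          = N * (1 - b) * Real.exp (-(N * (1 - b))) := by ring_nf
        _ ≤ 1 := hx
    have h1 : N * (∫ t in (0:ℝ)..b, Real.exp (-N * (1 - t)) * t ^ (σ2 - 1)) ≤
        b ^ (σ2 - 1) * (b / ((1 - b) * σ2)) := by
      have h1b : (0:ℝ) < 1 - b := by linarith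
      have hb2 : (0:ℝ) < b ^ σ2 := Real.rpow_pos_of_pos hb0 _
      calc N * (∫ t in (0:ℝ)..b, Real.exp (-N * (1 - t)) * t ^ (σ2 - 1))
          ≤ N * (Real.exp (-N * (1 - b)) * (b ^ σ2 / σ2)) :=
            mul_le_mul_of_nonneg_left hhead hN0
        _ = (N * Real.exp (-N * (1 - b))) * (b ^ σ2 / σ2) := by ring
        _ ≤ (1 / (1 - b)) * (b ^ σ2 / σ2) :=
            mul_le_mul_of_nonneg_right hNexp (by positivity)
        _ = b ^ (σ2 - 1) * (b / ((1 - b) * σ2)) := by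
            rw [show σ2 = (σ2 - 1) + 1 by ring, Real.rpow_add hb0, Real.rpow_one]
            field_simp
            ring_nf
    have h2 : N * (∫ t in b..(1:ℝ), Real.exp (-N * (1 - t)) * t ^ (σ2 - 1)) ≤
        b ^ (σ2 - 1) := by
      calc N * (∫ t in b..(1:ℝ), Real.exp (-N * (1 - t)) * t ^ (σ2 - 1))
          ≤ N * (b ^ (σ2 - 1) * ((1 - Real.exp (-N * (1 - b))) / N)) :=
            mul_le_mul_of_nonneg_left htail hN0
        _ = b ^ (σ2 - 1) * (1 - Real.exp (-N * (1 - b))) := by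
            field_simp
        _ ≤ b ^ (σ2 - 1) * 1 := by
            apply mul_le_mul_of_nonneg_left _ hbpow.le
            have := Real.exp_pos (-N * (1 - b))
            linarith
        _ = b ^ (σ2 - 1) := mul_one _
    calc _ ≤ b ^ (σ2 - 1) * (b / ((1 - b) * σ2)) + b ^ (σ2 - 1) := add_le_add h1 h2
      _ = b ^ (σ2 - 1) * (b / ((1 - b) * σ2) + 1) := by ring
  refine ⟨main, fun N hN => ?_⟩
  have := main (1/2) (by norm_num) (by norm_num) N hN
  have heq : ((1:ℝ)/2) ^ (σ2 - 1) * ((1/2) / ((1 - 1/2) * σ2) + 1) =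
      (2:ℝ) ^ (1 - σ2) * (1 + 1 / σ2) := by
    have e1 : ((1:ℝ)/2) ^ (σ2 - 1) = (2:ℝ) ^ (1 - σ2) := by
      rw [one_div, Real.inv_rpow (by norm_num), ← Real.rpow_neg (by norm_num), neg_sub]
    have e2 : ((1:ℝ)/2) / ((1 - 1/2) * σ2) + 1 = 1 + 1 / σ2 := by
      field_simp
      ring
    rw [e1, e2]
  rw [heq] at this
  exact this
end

section
/- Let ε > 0, σ² > 0, and for n ∈ ℕ with n ≥ 1 define T(n) = 1/(1+ε) + Σ_{i=1}^{n} (1/(1+ε)^{i+1}) · (Γ(n+1)·Γ(n+σ²−i))/(Γ(n+σ²)·Γ(n+1−i)), where the i = n term is interpreted via falling factorials as Π_{j=0}^{i−1}(n−j)/(n−1+σ²−j). Then T(0) = 1/(1+ε) and T satisfies the recursion T(n) = (1 + (n/(n−1+σ²))·T(n−1))/(1+ε) for all n ≥ 1. -/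
/-! With `r = 1/(1+ε)`, `T n = ∑_{i ≤ n} r^(i+1) (n)_i / (n-1+σ²)_i`. Splitting off the `j = 0`
factor `n / (n-1+σ²)` of the ratio for `(n, i+1)` leaves exactly the ratio for `(n-1, i)`, so after
shifting the summation index `T n = r (1 + n/(n-1+σ²) · T (n-1))`. -/

open Finset

theorem sum_range_succ_eq_add_sum_Icc {M : Type*} [AddCommMonoid M] (f : ℕ → M) (n : ℕ) :
    ∑ i ∈ range (n + 1), f i = f 0 + ∑ i ∈ Icc 1 n, f i := by
  rw [range_eq_Ico, sum_eq_sum_Ico_succ_bot n.succ_pos, zero_add, Nat.succ_eq_add_one,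
    Ico_add_one_right_eq_Icc]

section

variable {K : Type*} [Field K]

/-- `(x)_i / (y)_i` in falling-factorial notation, taken factor by factor. -/
def fallingRatio (x y : K) (i : ℕ) : K :=
  ∏ j ∈ range i, (x - j) / (y - j)

theorem fallingRatio_zero (x y : K) : fallingRatio x y 0 = 1 :=
  prod_range_zero _

theorem fallingRatio_succ_succ (x y : K) (i : ℕ) :
    fallingRatio (x + 1) (y + 1) (i + 1) = (x + 1) / (y + 1) * fallingRatio x y i := by
  rw [fallingRatio, prod_range_succ', mul_comm]
  simp only [fallingRatio, Nat.cast_zero, sub_zero, Nat.cast_succ, add_sub_add_right_eq_sub]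

theorem sum_range_succ_pow_mul_of_shift (r c : K) (P Q : ℕ → K) (hQ₀ : Q 0 = 1)
    (hQ : ∀ i, Q (i + 1) = c * P i) (n : ℕ) :
    ∑ i ∈ range (n + 1), r ^ (i + 1) * Q i = r * (1 + c * ∑ i ∈ range n, r ^ (i + 1) * P i) := by
  rw [sum_range_succ', hQ₀, zero_add, pow_one, mul_one, add_comm, mul_add, mul_one, mul_sum,
    mul_sum]
  congr 1
  refine sum_congr rfl fun i _ => ?_
  rw [hQ]
  ring

end

theorem stmt_15_general (ε σ2 : ℝ)
    (T : ℕ → ℝ)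
    (hT : ∀ n : ℕ, T n = 1 / (1 + ε) + ∑ i ∈ Finset.Icc 1 n,
      (1 / (1 + ε) ^ (i + 1)) * ∏ j ∈ Finset.range i, ((n : ℝ) - j) / ((n : ℝ) - 1 + σ2 - j)) :
    T 0 = 1 / (1 + ε) ∧
    ∀ n : ℕ, 1 ≤ n →
      T n = (1 + ((n : ℝ) / ((n : ℝ) - 1 + σ2)) * T (n - 1)) / (1 + ε) := by
  set r := 1 / (1 + ε)
  have hT_range (n : ℕ) :
      T n = ∑ i ∈ range (n + 1), r ^ (i + 1) * fallingRatio (n : ℝ) (n - 1 + σ2) i := by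
    rw [hT, sum_range_succ_eq_add_sum_Icc, fallingRatio_zero, pow_one, mul_one]
    simp only [r, one_div_pow, fallingRatio]
  refine ⟨by simp [hT 0], fun n hn => ?_⟩
  obtain ⟨m, rfl⟩ := Nat.exists_eq_add_of_le' hn
  have hshift (i : ℕ) : fallingRatio ((m + 1 : ℕ) : ℝ) ((m + 1 : ℕ) - 1 + σ2) (i + 1)
      = (m + 1) / (m + σ2) * fallingRatio (m : ℝ) (m - 1 + σ2) i := by
    have hy : ((m + 1 : ℕ) : ℝ) - 1 + σ2 = (m - 1 + σ2) + 1 := by push_cast; ring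
    rw [hy, Nat.cast_succ, fallingRatio_succ_succ]
    ring
  rw [hT_range, hT_range, Nat.add_sub_cancel,
    sum_range_succ_pow_mul_of_shift r _ _ _ (fallingRatio_zero _ _) hshift]
  push_cast
  ring

theorem stmt_15 (ε σ2 : ℝ) (hε : 0 < ε) (hσ : 0 < σ2)
    (T : ℕ → ℝ)
    (hT : ∀ n : ℕ, T n = 1 / (1 + ε) + ∑ i ∈ Finset.Icc 1 n,
      (1 / (1 + ε) ^ (i + 1)) * ∏ j ∈ Finset.range i, ((n : ℝ) - j) / ((n : ℝ) - 1 + σ2 - j)) :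
    T 0 = 1 / (1 + ε) ∧
    ∀ n : ℕ, 1 ≤ n →
      T n = (1 + ((n : ℝ) / ((n : ℝ) - 1 + σ2)) * T (n - 1)) / (1 + ε) :=
  stmt_15_general ε σ2 T hT
end
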